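/- Let K be a field of characteristic zero, s ≥ 1, and let A be the algebra of differential polynomials in x and u^k_j with total derivative D. Let r, p ≥ 0, let a_0, …, a_r be s×s matrices over A, and let G_1, …, G_p, γ_1, …, γ_p, Q ∈ A^s. Assume that for each α ∈ {1,…,p} the covector γ_α is self-adjoint in the sense that γ_α'(P) = γ_α'^†(P) for all P ∈ A^s, and suppose f_1, …, f_p ∈ A and g_{αβ} ∈ A (1 ≤ α, β ≤ p) satisfy D(f_β) = γ_β·Q and D(g_{αβ}) = G_β·γ_α. Define R(Q) := Σ_{i=0}^r a_i·D^i(Q) + Σ_{β=1}^p f_β·G_β ∈ A^s and ζ_α := Σ_{i=0}^r (−1)^i D^i(a_iᵀ·γ_α) − Σ_{β=1}^p g_{αβ}·γ_β ∈ A^s. Then for each α = 1, …, p, the Lie derivative of γ_α along R(Q) equals the variational derivative of Q·ζ_α: for every k = 1, …, s, (γ_α'(R(Q)))_k + ((R(Q))'^†(γ_α))_k = δ(Q·ζ_α)/δu^k. -/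

import Mathlib

/-- The algebra of differential polynomials in `x` (the variable `none`) and
`u^k_j = X (some (k, j))`, `1 ≤ k ≤ s`, `j ≥ 0`, over a field `K`. -/
abbrev DiffPoly (K : Type*) [Field K] (s : ℕ) : Type _ :=
  MvPolynomial (Option (Fin s × ℕ)) K

/-- The variational derivative `δf/δu^k = Σ_{j≥0} (−1)^j D^j(∂f/∂u^k_j)`. -/
noncomputable def varDeriv {K : Type*} [Field K] {s : ℕ}
    (D : Derivation K (DiffPoly K s) (DiffPoly K s))
    (f : DiffPoly K s) (k : Fin s) : DiffPoly K s :=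
  ∑ᶠ j : ℕ, (-1 : DiffPoly K s) ^ j * (⇑D)^[j] (MvPolynomial.pderiv (some (k, j)) f)

/-- The directional derivative: `(γ'(P))_l = Σ_{j≥0} Σ_k (∂γ_l/∂u^k_j)·D^j(P_k)`. -/
noncomputable def dirDeriv {K : Type*} [Field K] {s : ℕ}
    (D : Derivation K (DiffPoly K s) (DiffPoly K s))
    (γ P : Fin s → DiffPoly K s) (l : Fin s) : DiffPoly K s :=
  ∑ᶠ j : ℕ, ∑ k : Fin s,
    MvPolynomial.pderiv (some (k, j)) (γ l) * (⇑D)^[j] (P k)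

/-- The formal-adjoint action:
`(γ'^†(P))_k = Σ_{j≥0} Σ_l (−1)^j D^j((∂γ_l/∂u^k_j)·P_l)`. -/
noncomputable def adjDeriv {K : Type*} [Field K] {s : ℕ}
    (D : Derivation K (DiffPoly K s) (DiffPoly K s))
    (γ P : Fin s → DiffPoly K s) (k : Fin s) : DiffPoly K s :=
  ∑ᶠ j : ℕ, ∑ l : Fin s, (-1 : DiffPoly K s) ^ j *
    (⇑D)^[j] (MvPolynomial.pderiv (some (k, j)) (γ l) * P l)

/-!
Self-adjointness of `γ_α` turns the left-hand side into `γ_α'^†(R) + R'^†(γ_α)`, the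
variational derivative of the pairing `γ_α·R`. Integrating by parts,
`γ_α·(a_i D^i Q) ≡ Q·((−1)^i D^i(a_iᵀ γ_α))` modulo `im D`, and the hypotheses on `f` and `g`
give `γ_α·(f_β G_β) + Q·(g_{αβ} γ_β) = D(f_β g_{αβ})`; hence `γ_α·R ≡ Q·ζ_α` modulo `im D`.
The variational derivative vanishes on `im D`: the commutator relation
`[∂/∂u_{j+1}, D] = ∂/∂u_j` makes its defining sum telescope.
-/

open MvPolynomial Finset

theorem finsum_eq_sum_range_of_forall_ge {M : Type*} [AddCommMonoid M] (F : ℕ → M) (N : ℕ)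
    (h : ∀ j, N ≤ j → F j = 0) : ∑ᶠ j, F j = ∑ j ∈ range N, F j := by
  refine finsum_eq_sum_of_support_subset F fun j hj => ?_
  by_contra hjN
  exact hj (h j (by simpa using hjN))

theorem Function.iterate_map_sum {M F ι : Type*} [AddCommMonoid M] [FunLike F M M]
    [AddMonoidHomClass F M M] (f : F) (t : Finset ι) (x : ι → M) (n : ℕ) :
    (⇑f)^[n] (∑ i ∈ t, x i) = ∑ i ∈ t, (⇑f)^[n] (x i) := by
  induction n with
  | zero => rfl
  | succ n ih => simp only [Function.iterate_succ_apply', ih, map_sum]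

namespace Derivation

variable {R A : Type*} [CommRing R] [CommRing A] [Algebra R A] (D : Derivation R A A)

theorem map_neg_one_pow (i : ℕ) : D ((-1 : A) ^ i) = 0 := by
  simp [leibniz_pow]

theorem mul_iterate_sub_mem_range (i : ℕ) (u v : A) :
    u * (⇑D)^[i] v - (-1 : A) ^ i * (⇑D)^[i] u * v
      ∈ LinearMap.range (D : A →ₗ[R] A) := by
  induction i generalizing v with
  | zero => simp
  | succ i ih =>
    have hstep : D ((-1 : A) ^ i * (⇑D)^[i] u * v)
        = (-1 : A) ^ i * (⇑D)^[i + 1] u * v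
          + (-1 : A) ^ i * (⇑D)^[i] u * D v := by
      simp only [leibniz, map_neg_one_pow, Function.iterate_succ_apply', smul_eq_mul]
      ring
    convert add_mem (ih (D v)) (LinearMap.mem_range_self (D : A →ₗ[R] A)
      ((-1 : A) ^ i * (⇑D)^[i] u * v)) using 1
    rw [coeFn_coe, hstep, Function.iterate_succ_apply]
    ring

theorem dotProduct_mulVec_iterate_sub_mem_range {n : Type*} [Fintype n] (M : Matrix n n A)
    (γ Q : n → A) (i : ℕ) :
    ∑ l, γ l * ∑ m, M l m * (⇑D)^[i] (Q m)
        - ∑ m, Q m * ((-1 : A) ^ i * (⇑D)^[i] (∑ l, M l m * γ l))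
      ∈ LinearMap.range (D : A →ₗ[R] A) := by
  have hswap : ∑ l, γ l * ∑ m, M l m * (⇑D)^[i] (Q m)
        - ∑ m, Q m * ((-1 : A) ^ i * (⇑D)^[i] (∑ l, M l m * γ l))
      = ∑ l, ∑ m, (M l m * γ l * (⇑D)^[i] (Q m)
          - (-1 : A) ^ i * (⇑D)^[i] (M l m * γ l) * Q m) := by
    simp only [Function.iterate_map_sum, mul_sum, sum_sub_distrib]
    rw [sum_comm (γ := n) (f := fun m l => Q m * _)]
    congr 1 <;> exact sum_congr rfl fun _ _ => sum_congr rfl fun _ _ => by ring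
  rw [hswap]
  exact sum_mem fun l _ => sum_mem fun m _ => mul_iterate_sub_mem_range D i _ _

end Derivation

namespace DiffPoly

variable {K : Type*} [Field K] {s : ℕ}

structure IsTotalDerivative (D : Derivation K (DiffPoly K s) (DiffPoly K s)) : Prop where
  map_x : D (X none) = 1
  map_u : ∀ (k : Fin s) (j : ℕ), D (X (some (k, j))) = X (some (k, j + 1))

theorem exists_pderiv_eq_zero_of_le (f : DiffPoly K s) :
    ∃ N, ∀ (k : Fin s) (j : ℕ), N ≤ j → pderiv (some (k, j)) f = 0 := by
  classical
  let order : Option (Fin s × ℕ) → ℕ := fun v => v.elim 0 Prod.snd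
  refine ⟨f.vars.sup order + 1, fun k j hj => pderiv_eq_zero_of_notMem_vars fun hmem => ?_⟩
  have : j ≤ f.vars.sup order := Finset.le_sup (f := order) hmem
  omega

theorem exists_pderiv_eq_zero_of_le_family {ι : Type*} [Fintype ι] (F : ι → DiffPoly K s) :
    ∃ N, ∀ (i : ι) (k : Fin s) (j : ℕ), N ≤ j → pderiv (some (k, j)) (F i) = 0 := by
  choose N hN using fun i => exists_pderiv_eq_zero_of_le (F i)
  exact ⟨univ.sup N, fun i k j hj => hN i k j ((le_sup (mem_univ i)).trans hj)⟩

theorem map_pderiv_X_eq_zero (D : Derivation K (DiffPoly K s) (DiffPoly K s))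
    (v w : Option (Fin s × ℕ)) : D (pderiv v (X w : DiffPoly K s)) = 0 := by
  classical
  rw [pderiv_X, Pi.single_apply]
  split_ifs <;> simp

variable (D : Derivation K (DiffPoly K s) (DiffPoly K s))

theorem varDeriv_eq_sum_range (f : DiffPoly K s) (k : Fin s) (N : ℕ)
    (h : ∀ j, N ≤ j → pderiv (some (k, j)) f = 0) :
    varDeriv D f k
      = ∑ j ∈ range N, (-1 : DiffPoly K s) ^ j * (⇑D)^[j] (pderiv (some (k, j)) f) :=
  finsum_eq_sum_range_of_forall_ge _ N fun j hj => by rw [h j hj, iterate_map_zero, mul_zero]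

theorem adjDeriv_eq_sum_range (γ P : Fin s → DiffPoly K s) (k : Fin s) (N : ℕ)
    (h : ∀ (l : Fin s) (j : ℕ), N ≤ j → pderiv (some (k, j)) (γ l) = 0) :
    adjDeriv D γ P k
      = ∑ j ∈ range N, ∑ l, (-1 : DiffPoly K s) ^ j *
          (⇑D)^[j] (pderiv (some (k, j)) (γ l) * P l) :=
  finsum_eq_sum_range_of_forall_ge _ N fun j hj => sum_eq_zero fun l _ => by
    rw [h l j hj, zero_mul, iterate_map_zero, mul_zero]

theorem varDeriv_add (f g : DiffPoly K s) (k : Fin s) :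
    varDeriv D (f + g) k = varDeriv D f k + varDeriv D g k := by
  obtain ⟨N, hN⟩ := exists_pderiv_eq_zero_of_le_family ![f, g]
  have hf : ∀ j, N ≤ j → pderiv (some (k, j)) f = 0 := hN 0 k
  have hg : ∀ j, N ≤ j → pderiv (some (k, j)) g = 0 := hN 1 k
  rw [varDeriv_eq_sum_range D f k N hf, varDeriv_eq_sum_range D g k N hg,
    varDeriv_eq_sum_range D (f + g) k N fun j hj => by rw [map_add, hf j hj, hg j hj, add_zero],
    ← sum_add_distrib]
  exact sum_congr rfl fun j _ => by rw [map_add, iterate_map_add, mul_add]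

theorem varDeriv_dot (γ P : Fin s → DiffPoly K s) (k : Fin s) :
    varDeriv D (∑ l, γ l * P l) k = adjDeriv D γ P k + adjDeriv D P γ k := by
  obtain ⟨N, hN⟩ := exists_pderiv_eq_zero_of_le_family (Sum.elim γ P)
  have hγ : ∀ l j, N ≤ j → pderiv (some (k, j)) (γ l) = 0 := fun l => hN (.inl l) k
  have hP : ∀ l j, N ≤ j → pderiv (some (k, j)) (P l) = 0 := fun l => hN (.inr l) k
  rw [varDeriv_eq_sum_range D _ k N fun j hj => (map_sum _ _ _).trans <| sum_eq_zero fun l _ => by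
      rw [pderiv_mul, hγ l j hj, hP l j hj, zero_mul, mul_zero, add_zero],
    adjDeriv_eq_sum_range D γ P k N hγ, adjDeriv_eq_sum_range D P γ k N hP,
    ← sum_add_distrib]
  refine sum_congr rfl fun j _ => ?_
  simp only [map_sum, pderiv_mul, Function.iterate_map_sum, mul_sum, ← sum_add_distrib]
  exact sum_congr rfl fun l _ => by rw [iterate_map_add, mul_add, mul_comm (γ l), add_comm]

variable {D}

namespace IsTotalDerivative

theorem lie_pderiv_succ (hD : IsTotalDerivative D) (k : Fin s) (j : ℕ) :
    ⁅(pderiv (some (k, j + 1)) : Derivation K (DiffPoly K s) (DiffPoly K s)), D⁆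
      = pderiv (some (k, j)) := by
  refine derivation_ext fun v => ?_
  rw [Derivation.commutator_apply, map_pderiv_X_eq_zero, sub_zero]
  rcases v with _ | ⟨l, i⟩
  · rw [hD.map_x, pderiv_one, pderiv_X_of_ne (by simp)]
  · rw [hD.map_u]
    by_cases h : l = k ∧ i = j
    · obtain ⟨rfl, rfl⟩ := h
      rw [pderiv_X_self, pderiv_X_self]
    · rw [pderiv_X_of_ne, pderiv_X_of_ne] <;> simp only [ne_eq, Option.some.injEq,
        Prod.mk.injEq] <;> omega

theorem lie_pderiv_zero (hD : IsTotalDerivative D) (k : Fin s) :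
    ⁅(pderiv (some (k, 0)) : Derivation K (DiffPoly K s) (DiffPoly K s)), D⁆ = 0 := by
  refine derivation_ext fun v => ?_
  rw [Derivation.commutator_apply, map_pderiv_X_eq_zero, sub_zero]
  rcases v with _ | ⟨l, i⟩
  · rw [hD.map_x, pderiv_one, Derivation.zero_apply]
  · rw [hD.map_u, pderiv_X_of_ne (by simp), Derivation.zero_apply]

theorem varDeriv_map_eq_zero (hD : IsTotalDerivative D) (f : DiffPoly K s) (k : Fin s) :
    varDeriv D (D f) k = 0 := by
  have hsucc (j : ℕ) : pderiv (some (k, j + 1)) (D f)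
      = D (pderiv (some (k, j + 1)) f) + pderiv (some (k, j)) f := by
    have := DFunLike.congr_fun (hD.lie_pderiv_succ k j) f
    rw [Derivation.commutator_apply] at this
    linear_combination this
  have hzero : pderiv (some (k, 0)) (D f) = D (pderiv (some (k, 0)) f) := by
    have := DFunLike.congr_fun (hD.lie_pderiv_zero k) f
    rw [Derivation.commutator_apply, Derivation.zero_apply] at this
    linear_combination this
  have htelescope (n : ℕ) : ∑ j ∈ range (n + 1),
        (-1 : DiffPoly K s) ^ j * (⇑D)^[j] (pderiv (some (k, j)) (D f))
      = (-1 : DiffPoly K s) ^ n * (⇑D)^[n + 1] (pderiv (some (k, n)) f) := by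
    induction n with
    | zero => simp [hzero]
    | succ n ih =>
      rw [sum_range_succ, ih, hsucc, iterate_map_add, ← Function.iterate_succ_apply]
      ring
  obtain ⟨N, hN⟩ := exists_pderiv_eq_zero_of_le f
  rw [varDeriv_eq_sum_range D (D f) k (N + 1) fun j hj => ?_, htelescope, hN k N le_rfl,
    iterate_map_zero, mul_zero]
  obtain ⟨m, rfl⟩ : ∃ m, j = m + 1 := ⟨j - 1, by omega⟩
  rw [hsucc, hN k (m + 1) (by omega), hN k m (by omega), map_zero, add_zero]

theorem varDeriv_eq_of_sub_mem_range (hD : IsTotalDerivative D) {f g : DiffPoly K s}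
    (h : f - g ∈ LinearMap.range (D : DiffPoly K s →ₗ[K] DiffPoly K s)) (k : Fin s) :
    varDeriv D f k = varDeriv D g k := by
  obtain ⟨e, he⟩ := h
  rw [Derivation.coeFn_coe] at he
  rw [sub_eq_iff_eq_add'.mp he.symm, varDeriv_add, hD.varDeriv_map_eq_zero, add_zero]

end IsTotalDerivative

end DiffPoly

theorem stmt_12_general {K : Type*} [Field K] (s r p : ℕ)
    (D : Derivation K (DiffPoly K s) (DiffPoly K s))
    (hx : D (MvPolynomial.X none) = 1)
    (hu : ∀ (k : Fin s) (j : ℕ),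
      D (MvPolynomial.X (some (k, j))) = MvPolynomial.X (some (k, j + 1)))
    (a : ℕ → Matrix (Fin s) (Fin s) (DiffPoly K s))
    (G γv : Fin p → Fin s → DiffPoly K s) (Q : Fin s → DiffPoly K s)
    (hself : ∀ (α : Fin p) (P : Fin s → DiffPoly K s) (k : Fin s),
      dirDeriv D (γv α) P k = adjDeriv D (γv α) P k)
    (f : Fin p → DiffPoly K s) (g : Fin p → Fin p → DiffPoly K s)
    (hf : ∀ β, D (f β) = ∑ k, γv β k * Q k)
    (hg : ∀ α β, D (g α β) = ∑ k, G β k * γv α k)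
    (RQ : Fin s → DiffPoly K s)
    (hRQ : ∀ k, RQ k = (∑ i ∈ Finset.range (r + 1), ∑ l, a i k l * (⇑D)^[i] (Q l))
        + ∑ β, f β * G β k)
    (ζ : Fin p → Fin s → DiffPoly K s)
    (hζ : ∀ α k, ζ α k = (∑ i ∈ Finset.range (r + 1),
          (-1 : DiffPoly K s) ^ i * (⇑D)^[i] (∑ l, a i l k * γv α l))
        - ∑ β, g α β * γv β k) :
    ∀ (α : Fin p) (k : Fin s),
      dirDeriv D (γv α) RQ k + adjDeriv D RQ (γv α) k
        = varDeriv D (∑ k', Q k' * ζ α k') k := by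
  intro α k
  rw [hself α RQ k, ← DiffPoly.varDeriv_dot D (γv α) RQ k]
  refine DiffPoly.IsTotalDerivative.varDeriv_eq_of_sub_mem_range ⟨hx, hu⟩ ?_ k
  have hsplit : ∑ l, γv α l * RQ l - ∑ m, Q m * ζ α m
      = ∑ i ∈ range (r + 1), (∑ l, γv α l * ∑ m, a i l m * (⇑D)^[i] (Q m)
          - ∑ m, Q m * ((-1 : DiffPoly K s) ^ i * (⇑D)^[i] (∑ l, a i l m * γv α l)))
        + ∑ β, D (f β * g α β) := by
    simp only [hRQ, hζ, Derivation.leibniz, hf, hg, smul_eq_mul, mul_add, mul_sub, mul_sum,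
      sum_add_distrib, sum_sub_distrib]
    rw [sum_comm (s := univ) (t := range (r + 1)), sum_comm (s := univ) (t := range (r + 1)),
      sum_comm (s := (univ : Finset (Fin s))) (t := (univ : Finset (Fin p))),
      sum_comm (s := (univ : Finset (Fin s))) (t := (univ : Finset (Fin p)))]
    simp only [mul_comm, mul_left_comm]
    ring
  rw [hsplit]
  exact add_mem (sum_mem fun i _ => D.dotProduct_mulVec_iterate_sub_mem_range (a i) _ _ i)
    (sum_mem fun β _ => LinearMap.mem_range_self _ _)

/-- (the key Lemma) In the algebra of differential polynomials with total
derivative `D`, let `a_0, …, a_r` be `s×s` matrices, `G_α, γ_α, Q ∈ A^s` with each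
`γ_α` self-adjoint (`γ_α'(P) = γ_α'^†(P)` for all `P`), and `f_β, g_{αβ} ∈ A` with
`D(f_β) = γ_β·Q`, `D(g_{αβ}) = G_β·γ_α`. Set
`R(Q) = Σ_i a_i·D^i(Q) + Σ_β f_β·G_β` and
`ζ_α = Σ_i (−1)^i D^i(a_iᵀ·γ_α) − Σ_β g_{αβ}·γ_β`. Then for each `α` the Lie
derivative of `γ_α` along `R(Q)` equals the variational derivative of `Q·ζ_α`:
`γ_α'(R(Q)) + (R(Q))'^†(γ_α) = δ(Q·ζ_α)/δu` componentwise. -/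
theorem stmt_12 {K : Type*} [Field K] [CharZero K] (s r p : ℕ) (hs : 1 ≤ s)
    (D : Derivation K (DiffPoly K s) (DiffPoly K s))
    (hx : D (MvPolynomial.X none) = 1)
    (hu : ∀ (k : Fin s) (j : ℕ),
      D (MvPolynomial.X (some (k, j))) = MvPolynomial.X (some (k, j + 1)))
    (a : ℕ → Matrix (Fin s) (Fin s) (DiffPoly K s))
    (G γv : Fin p → Fin s → DiffPoly K s) (Q : Fin s → DiffPoly K s)
    (hself : ∀ (α : Fin p) (P : Fin s → DiffPoly K s) (k : Fin s),
      dirDeriv D (γv α) P k = adjDeriv D (γv α) P k)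
    (f : Fin p → DiffPoly K s) (g : Fin p → Fin p → DiffPoly K s)
    (hf : ∀ β, D (f β) = ∑ k, γv β k * Q k)
    (hg : ∀ α β, D (g α β) = ∑ k, G β k * γv α k)
    (RQ : Fin s → DiffPoly K s)
    (hRQ : ∀ k, RQ k = (∑ i ∈ Finset.range (r + 1), ∑ l, a i k l * (⇑D)^[i] (Q l))
        + ∑ β, f β * G β k)
    (ζ : Fin p → Fin s → DiffPoly K s)
    (hζ : ∀ α k, ζ α k = (∑ i ∈ Finset.range (r + 1),
          (-1 : DiffPoly K s) ^ i * (⇑D)^[i] (∑ l, a i l k * γv α l))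
        - ∑ β, g α β * γv β k) :
    ∀ (α : Fin p) (k : Fin s),
      dirDeriv D (γv α) RQ k + adjDeriv D RQ (γv α) k
        = varDeriv D (∑ k', Q k' * ζ α k') k :=
  stmt_12_general s r p D hx hu a G γv Q hself f g hf hg RQ hRQ ζ hζ
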